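/- Let σ ∈ {0,1}^{ℤ²} be a configuration, Δ ⊂ ℤ² a finite set, and C a mixed circuit around Δ with respect to σ. Let x, y be sites in the exterior of C. If there exists a 1*path from x to y with respect to σ, then there exists a 1*path from x to y with respect to σ that avoids Δ. -/

import Mathlib

open MeasureTheory ProbabilityTheory
open scoped ENNReal

namespace Percolation

/-- Sites of the square lattice. -/
abbrev Site : Type := ℤ × ℤ

/-- Configurations: spins `0`/`1` encoded as `false`/`true`. -/
abbrev Config : Type := Site → Bool

/-- Nearest-neighbour adjacency: Euclidean distance `1`. -/
def adj (x y : Site) : Prop :=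
  (x.1 - y.1) ^ 2 + (x.2 - y.2) ^ 2 = 1

/-- `*`adjacency: Euclidean distance `1` or `√2`. -/
def adjStar (x y : Site) : Prop :=
  x ≠ y ∧ |x.1 - y.1| ≤ 1 ∧ |x.2 - y.2| ≤ 1

/-- `x` and `y` are joined inside `G` by a path whose consecutive sites satisfy `R`. -/
def JoinedIn (R : Site → Site → Prop) (G : Set Site) (x y : Site) : Prop :=
  ∃ P : List Site, P.Chain' R ∧ (∀ z ∈ P, z ∈ G) ∧ P.head? = some x ∧ P.getLast? = some y

/-- `S` is a `0`cluster of `σ`: a maximal `adj`-connected subset of `σ⁻¹(0)`. -/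
def IsCluster0 (σ : Config) (S : Set Site) : Prop :=
  S.Nonempty ∧ (∀ z ∈ S, σ z = false) ∧
    (∀ x ∈ S, ∀ y ∈ S, JoinedIn adj S x y) ∧
    (∀ x ∈ S, ∀ y : Site, adj x y → σ y = false → y ∈ S)

/-- `S` is a `1*`cluster of `σ`: a maximal `adjStar`-connected subset of `σ⁻¹(1)`. -/
def IsCluster1 (σ : Config) (S : Set Site) : Prop :=
  S.Nonempty ∧ (∀ z ∈ S, σ z = true) ∧
    (∀ x ∈ S, ∀ y ∈ S, JoinedIn adjStar S x y) ∧
    (∀ x ∈ S, ∀ y : Site, adjStar x y → σ y = true → y ∈ S)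

/-- `x` belongs to an infinite `1*`cluster of `σ`. -/
def InInfinite1 (σ : Config) (x : Site) : Prop :=
  ∃ S : Set Site, IsCluster1 σ S ∧ S.Infinite ∧ x ∈ S

/-- There is exactly one infinite `0`cluster. -/
def UniqueInfinite0 (σ : Config) : Prop :=
  ∃! S : Set Site, IsCluster0 σ S ∧ S.Infinite

/-- There is exactly one infinite `1*`cluster. -/
def UniqueInfinite1 (σ : Config) : Prop :=
  ∃! S : Set Site, IsCluster1 σ S ∧ S.Infinite

/-- There is at most one infinite `1*`cluster. -/
def AtMostOneInfinite1 (σ : Config) : Prop :=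
  ∀ S T : Set Site, IsCluster1 σ S → S.Infinite → IsCluster1 σ T → T.Infinite → S = T

/-- An infinite `1*`cluster exists. -/
def ExistsInfinite1 (σ : Config) : Prop := ∃ S : Set Site, IsCluster1 σ S ∧ S.Infinite

/-- An infinite `0`cluster exists. -/
def ExistsInfinite0 (σ : Config) : Prop := ∃ S : Set Site, IsCluster0 σ S ∧ S.Infinite

/-- An increasing event. -/
def IncreasingEvent (A : Set Config) : Prop :=
  ∀ ⦃ξ η : Config⦄, ξ ∈ A → ξ ≤ η → η ∈ A

/-- Positive association: increasing events are positively correlated. -/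
def PositivelyAssociated (μ : Measure Config) : Prop :=
  ∀ A B : Set Config, MeasurableSet A → MeasurableSet B →
    IncreasingEvent A → IncreasingEvent B → μ A * μ B ≤ μ (A ∩ B)

/-- The cylinder event "`η` on `Δ`". -/
def cylEvent (Δ : Finset Site) (η : Site → Bool) : Set Config :=
  {σ | ∀ z ∈ Δ, σ z = η z}

/-- The σ-algebra generated by the spins outside `Δ`. -/
def outsideAlgebra (Δ : Finset Site) : MeasurableSpace Config :=
  MeasurableSpace.comap (fun σ (z : {z : Site // z ∉ Δ}) => σ z.1) inferInstance

/-- The bounded energy condition: `μ(η on Δ | ξ off Δ) ≥ c_{|Δ|}` for a.e. `ξ`, expressed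
via integrated conditional probabilities against events of the outside σ-algebra. -/
def BoundedEnergy (μ : Measure Config) : Prop :=
  ∀ n : ℕ, ∃ c : ℝ≥0∞, 0 < c ∧
    ∀ Δ : Finset Site, Δ.card = n → ∀ η : Site → Bool,
      ∀ B : Set Config, MeasurableSet[outsideAlgebra Δ] B →
        c * μ B ≤ μ (cylEvent Δ η ∩ B)

/-- The finite energy condition: `μ(η on Δ | ξ off Δ) > 0` for a.e. `ξ`, expressed
via integrated conditional probabilities against events of the outside σ-algebra. -/
def FiniteEnergy (μ : Measure Config) : Prop :=
  ∀ (Δ : Finset Site) (η : Site → Bool) (B : Set Config),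
    MeasurableSet[outsideAlgebra Δ] B → 0 < μ B → 0 < μ (cylEvent Δ η ∩ B)

/-- The tail σ-algebra. -/
def tailAlgebra : MeasurableSpace Config :=
  ⨅ Δ : Finset Site, outsideAlgebra Δ

/-- Translation of configurations by `v`. -/
def shift (v : Site) (σ : Config) : Config := fun z => σ (z + v)

/-- A site viewed as a complex number. -/
noncomputable def toC (z : Site) : ℂ := (z.1 : ℂ) + (z.2 : ℂ) * Complex.I

/-- Winding number around the origin of the polygonal curve through the sites of `P`. -/
noncomputable def winding (P : List Site) : ℝ :=
  (1 / (2 * Real.pi)) *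
    ((P.zip P.tail).map fun p => Complex.arg (toC p.2 / toC p.1)).sum

/-- Winding number of `P` around the site `w`. -/
noncomputable def windingAround (P : List Site) (w : Site) : ℝ :=
  winding (P.map fun z => z - w)

/-- The site `w` lies in the interior of the circuit `C`, i.e. is enclosed by `C`. -/
def circuitEncloses (C : List Site) (w : Site) : Prop :=
  w ∉ C ∧ windingAround (C ++ C.take 1) w ≠ 0

/-- A circuit: a path whose starting site is adjacent to its ending site. -/
def IsCircuit (C : List Site) : Prop :=
  C.Chain' adj ∧ ∃ h : C ≠ [], adj (C.getLast h) (C.head h)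

/-- A `*`circuit: a `*`path whose starting site is `*`adjacent to its ending site. -/
def IsStarCircuit (C : List Site) : Prop :=
  C.Chain' adjStar ∧ ∃ h : C ≠ [], adjStar (C.getLast h) (C.head h)

/-- A (finite) `1*`path with respect to `σ`. -/
def Is1StarPath (σ : Config) (P : List Site) : Prop :=
  P ≠ [] ∧ P.Chain' adjStar ∧ ∀ z ∈ P, σ z = true

/-- A (finite) `0`path with respect to `σ`. -/
def Is0Path (σ : Config) (P : List Site) : Prop :=
  P ≠ [] ∧ P.Chain' adj ∧ ∀ z ∈ P, σ z = false

/-- A `1*`circuit with respect to `σ`. -/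
def Is1StarCircuit (σ : Config) (C : List Site) : Prop :=
  IsStarCircuit C ∧ ∀ z ∈ C, σ z = true

/-- A `0`circuit with respect to `σ`. -/
def Is0Circuit (σ : Config) (C : List Site) : Prop :=
  IsCircuit C ∧ ∀ z ∈ C, σ z = false

/-- `C` is a circuit around `Δ`: every site of `Δ` is enclosed by `C`. -/
def CircuitAround (C : List Site) (Δ : Set Site) : Prop :=
  ∀ z ∈ Δ, circuitEncloses C z

/-- A mixed circuit with respect to `σ`: a self-avoiding `*`circuit consisting of a
self-avoiding `1*`path followed by a self-avoiding `0`path (either part may be empty). -/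
def IsMixedCircuit (σ : Config) (C : List Site) : Prop :=
  ∃ P Q : List Site, C = P ++ Q ∧ C.Nodup ∧
    P.Chain' adjStar ∧ Q.Chain' adj ∧
    (∀ z ∈ P, σ z = true) ∧ (∀ z ∈ Q, σ z = false) ∧ IsStarCircuit C

/-- `z` lies in the exterior of the circuit `C`. -/
def InExterior (C : List Site) (z : Site) : Prop :=
  z ∉ C ∧ ¬ circuitEncloses C z

/-- An infinite self-avoiding `1*`path with respect to `σ`. -/
def IsInfSA1StarPath (σ : Config) (f : ℕ → Site) : Prop :=
  Function.Injective f ∧ (∀ i, adjStar (f i) (f (i + 1))) ∧ ∀ i, σ (f i) = true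

/-- An infinite self-avoiding `0`path with respect to `σ`. -/
def IsInfSA0Path (σ : Config) (f : ℕ → Site) : Prop :=
  Function.Injective f ∧ (∀ i, adj (f i) (f (i + 1))) ∧ ∀ i, σ (f i) = false

/-- There exist `n` pairwise disjoint infinite self-avoiding `1*`paths. -/
def HasNDisjoint1 (σ : Config) (n : ℕ) : Prop :=
  ∃ f : Fin n → ℕ → Site, (∀ i, IsInfSA1StarPath σ (f i)) ∧
    ∀ i j, i ≠ j → Disjoint (Set.range (f i)) (Set.range (f j))

/-- A two-sided infinite self-avoiding `1*`path with respect to `σ`. -/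
def IsTwoSidedInf1 (σ : Config) (f : ℤ → Site) : Prop :=
  Function.Injective f ∧ (∀ i : ℤ, adjStar (f i) (f (i + 1))) ∧ ∀ i : ℤ, σ (f i) = true

/-- A `1*`path of `σ` from `x` to `y` avoiding `Δ`. -/
def starPathBetweenAvoiding (σ : Config) (Δ : Set Site) (x y : Site) (P : List Site) : Prop :=
  Is1StarPath σ P ∧ P.head? = some x ∧ P.getLast? = some y ∧ ∀ z ∈ P, z ∉ Δ

/-- `x` is on the left side of `Γ`. -/
def OnLeftSide (x : Site) (Γ : Set Site) : Prop :=
  ∃ d : ℕ, 0 < d ∧ (∀ z ∈ Γ, |z.1| ≤ (d : ℤ) ∧ |z.2| ≤ (d : ℤ)) ∧ x.1 ≤ -(d : ℤ)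

/-- `x` is on the right side of `Γ`. -/
def OnRightSide (x : Site) (Γ : Set Site) : Prop :=
  ∃ d : ℕ, 0 < d ∧ (∀ z ∈ Γ, |z.1| ≤ (d : ℤ) ∧ |z.2| ≤ (d : ℤ)) ∧ (d : ℤ) ≤ x.1

/-- The square `{-n, …, n}²`. -/
def square (n : ℕ) : Set Site := {z : Site | |z.1| ≤ (n : ℤ) ∧ |z.2| ≤ (n : ℤ)}

/-- The `*`boundary `∂*B` of a set of sites. -/
def starBoundary (B : Set Site) : Set Site :=
  {x | x ∉ B ∧ ∃ y ∈ B, adjStar x y}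

/-- The union of all infinite `1*`clusters of `σ`. -/
def InfinitePart1 (σ : Config) : Set Site := {z | InInfinite1 σ z}

/-- The filled infinite `1*`cluster `S₁*`: the infinite `1*`cluster together with all
finite `0`clusters `*`encircled by it. -/
def Fill (σ : Config) : Set Site :=
  InfinitePart1 σ ∪
    {z | ∃ F : Set Site, IsCluster0 σ F ∧ F.Finite ∧ z ∈ F ∧
      ∃ C : List Site, IsStarCircuit C ∧ (∀ w ∈ C, w ∈ InfinitePart1 σ) ∧
        ∀ w ∈ F, circuitEncloses C w}

/-- The indicator of the filled infinite `1*`cluster, as a point of `{0,1}^{ℤ²}`. -/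
noncomputable def fillInd (σ : Config) : Site → Bool :=
  fun z => @decide (z ∈ Fill σ) (Classical.propDecidable _)

/-- Exactly one infinite `0`cluster and exactly one infinite `1*`cluster coexist. -/
def CoexistUnique (σ : Config) : Prop := UniqueInfinite0 σ ∧ UniqueInfinite1 σ

/-!
Let `S` be the sites of spin `1` and `E` the sites enclosed by `C`. A `1*`path from `x` to `y`
that enters `E` has to leave it again, so it is enough that all *gates* (sites of `S \ E` that are
`*`adjacent to a site of `S ∩ E`) are joined inside `S \ E`.

A `*`step from a gate into `E` changes the winding number of `C`, so its segment meets an edge of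
`C`. Neither of its ends lies on `C`, and the relative interior of a `*`step lies in a single cell
of the lattice, so the step and the edge are the two diagonals of one unit square. A diagonal edge
is not a `0`step: it starts in the `1*`part of `C`, or it is the edge closing the circuit. If the
`1*`part is nonempty, every gate is therefore `*`adjacent to it, and all gates are joined along it.
Otherwise every gate crosses the closing edge, and there is only one gate.
-/

end Percolation

open Relation Complex Real

namespace List

variable {α : Type*}

theorem rel_of_mem_zip_tail {R : α → α → Prop} :
    ∀ {l : List α}, l.IsChain R → ∀ {p : α × α}, p ∈ l.zip l.tail → R p.1 p.2
  | [], _, _, hp => by simp at hp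
  | [_], _, _, hp => by simp at hp
  | a :: b :: l, h, p, hp => by
    rw [isChain_cons_cons] at h
    obtain rfl | hp := mem_cons.mp hp
    · exact h.1
    · exact rel_of_mem_zip_tail h.2 hp

theorem mem_of_mem_zip_tail {l : List α} {p : α × α} (hp : p ∈ l.zip l.tail) :
    p.1 ∈ l ∧ p.2 ∈ l :=
  ⟨(of_mem_zip hp).1, mem_of_mem_tail (of_mem_zip hp).2⟩

theorem mem_zip_tail_append {p : α × α} :
    ∀ {l m : List α}, p ∈ (l ++ m).zip (l ++ m).tail →
      p ∈ l.zip l.tail ∨ p ∈ m.zip m.tail ∨ (l.getLast? = some p.1 ∧ m.head? = some p.2)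
  | [], _, hp => .inr (.inl hp)
  | [_], [], hp => by simp at hp
  | [_], _ :: _, hp => by
    obtain rfl | hp := mem_cons.mp hp
    · simp
    · exact .inr (.inl hp)
  | a :: b :: l, m, hp => by
    obtain rfl | hp := mem_cons.mp hp
    · simp
    · rcases mem_zip_tail_append hp with h | h | h
      · exact .inl (mem_cons_of_mem _ h)
      · exact .inr (.inl h)
      · exact .inr (.inr (by simpa using h))

theorem head?_eq_getLast?_append_take_one (l : List α) :
    (l ++ l.take 1).head? = (l ++ l.take 1).getLast? := by
  cases l with
  | nil => rfl
  | cons a l =>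
    rw [take_succ_cons, take_zero, getLast?_append_of_ne_nil _ (cons_ne_nil a [])]
    rfl

theorem prod_map_zip_tail_div {G : Type*} [CommGroup G] (f : α → G) :
    ∀ (a : α) (l : List α),
      (((a :: l).zip l).map fun p => f p.2 / f p.1).prod = f ((a :: l).getLast (by simp)) / f a
  | a, [] => by simp
  | a, b :: l => by
    rw [zip_cons_cons, map_cons, prod_cons, prod_map_zip_tail_div f b l,
      getLast_cons (cons_ne_nil b l), mul_comm, div_mul_div_cancel]

theorem IsChain.reflTransGen_head {R : α → α → Prop} {a : α} {l : List α}
    (h : (a :: l).IsChain R) {b : α} (hb : b ∈ a :: l) : ReflTransGen R a b :=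
  h.induction (ReflTransGen R a) _ (fun _ _ hxy hx => hx.tail hxy) (fun _ => .refl) b hb

end List

theorem Int.eq_and_eq_or_of_min_max {a b c d : ℤ} (hmin : min a b = min c d)
    (hmax : max a b = max c d) : a = c ∧ b = d ∨ a = d ∧ b = c := by
  omega

theorem Circle.exp_list_sum (l : List ℝ) : Circle.exp l.sum = (l.map Circle.exp).prod := by
  induction l with
  | nil => simp
  | cons a l ih => simp [Circle.exp_add, ih]

theorem Circle.exp_arg_div {a b : ℂ} (ha : a ≠ 0) (hb : b ≠ 0) :
    Circle.exp (arg (a / b)) = Circle.exp (arg a) / Circle.exp (arg b) := by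
  rw [← Real.Angle.toCircle_coe, arg_div_coe_angle ha hb, ← Real.Angle.coe_sub,
    Real.Angle.toCircle_coe, Circle.exp_sub]

theorem Complex.div_mem_slitPlane_of_notMem_segment {a b w : ℂ} (h : w ∉ segment ℝ a b) :
    (b - w) / (a - w) ∈ slitPlane := by
  have ha : a - w ≠ 0 := sub_ne_zero.mpr fun h' => h (h' ▸ left_mem_segment ℝ a b)
  set q := (b - w) / (a - w)
  by_contra hq
  rw [mem_slitPlane_iff, not_or, not_lt, not_not] at hq
  obtain ⟨r, hr⟩ : ∃ r : ℝ, q = r := ⟨q.re, Complex.ext (by simp) (by simp [hq.2])⟩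
  have hb : b - w = (-r) • (w - a) := by
    rw [Complex.real_smul, ← div_mul_cancel₀ (b - w) ha]
    change q * _ = _
    rw [hr]
    push_cast
    ring
  refine h (mem_segment_iff_sameRay.mpr ?_)
  rw [hb]
  exact SameRay.sameRay_nonneg_smul_right _ (neg_nonneg.mpr (by simpa [hr] using hq.1))

namespace Percolation

instance : Std.Symm adjStar :=
  ⟨fun a b h => ⟨h.1.symm, abs_sub_comm a.1 b.1 ▸ h.2.1, abs_sub_comm a.2 b.2 ▸ h.2.2⟩⟩

def RelIn (R : Site → Site → Prop) (G : Set Site) (a b : Site) : Prop :=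
  a ∈ G ∧ b ∈ G ∧ R a b

theorem joinedIn_iff {R : Site → Site → Prop} {G : Set Site} {x y : Site} :
    JoinedIn R G x y ↔ x ∈ G ∧ ReflTransGen (RelIn R G) x y := by
  constructor
  · rintro ⟨_ | ⟨a, l⟩, hchain, hG, hx, hy⟩
    · simp at hx
    obtain rfl : a = x := by simpa using hx
    refine ⟨hG _ List.mem_cons_self, List.relationReflTransGen_of_exists_isChain_cons l ?_ ?_⟩
    · exact (List.IsChain.iff_mem.mp hchain).imp fun b c h => ⟨hG b h.1, hG c h.2.1, h.2.2⟩
    · simpa [List.getLast?_eq_some_getLast] using hy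
  · rintro ⟨hx, h⟩
    obtain ⟨l, hchain, hlast⟩ := List.exists_isChain_cons_of_relationReflTransGen h
    refine ⟨x :: l, hchain.imp fun _ _ h => h.2.2, ?_, rfl, ?_⟩
    · exact hchain.induction (· ∈ G) _ (fun _ _ h _ => h.2.1) (fun _ => hx)
    · rw [List.getLast?_eq_some_getLast (List.cons_ne_nil _ _), hlast]

theorem reflTransGen_relIn_symm {R : Site → Site → Prop} [Std.Symm R] {G : Set Site}
    {a b : Site} (h : ReflTransGen (RelIn R G) a b) : ReflTransGen (RelIn R G) b a := by
  induction h with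
  | refl => exact .refl
  | tail _ hbc ih => exact ih.head ⟨hbc.2.1, hbc.1, symm_of R hbc.2.2⟩

/-- A path that enters `E` leaves it again through a gate. -/
theorem reflTransGen_diff_of_gates {R : Site → Site → Prop} [Std.Symm R] {S E : Set Site}
    (hgate : ∀ q q' r r', q ∈ S \ E → q' ∈ S \ E → r ∈ S ∩ E → r' ∈ S ∩ E → R q r → R q' r' →
      ReflTransGen (RelIn R (S \ E)) q q')
    {x y : Site} (hx : x ∉ E) (hy : y ∉ E) (h : ReflTransGen (RelIn R S) x y) :
    ReflTransGen (RelIn R (S \ E)) x y := by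
  suffices ∀ z, ReflTransGen (RelIn R S) x z →
      (z ∉ E → ReflTransGen (RelIn R (S \ E)) x z) ∧
      (z ∈ E → ∃ q r, q ∈ S \ E ∧ r ∈ S ∩ E ∧ R q r ∧ ReflTransGen (RelIn R (S \ E)) x q) from
    (this y h).1 hy
  intro z hz
  induction hz with
  | refl => exact ⟨fun _ => .refl, fun h => absurd h hx⟩
  | @tail b c _ hbc ih =>
    obtain ⟨hb, hc, hbc⟩ := hbc
    by_cases hbE : b ∈ E <;> by_cases hcE : c ∈ E
    · exact ⟨fun h => absurd hcE h, fun _ => ih.2 hbE⟩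
    · obtain ⟨q, r, hq, hr, hqr, hxq⟩ := ih.2 hbE
      exact ⟨fun _ => hxq.trans (hgate q c r b hq ⟨hc, hcE⟩ hr ⟨hb, hbE⟩ hqr (symm_of R hbc)),
        fun h => absurd h hcE⟩
    · exact ⟨fun h => absurd hcE h, fun _ => ⟨b, c, ⟨hb, hbE⟩, ⟨hc, hcE⟩, hbc, ih.1 hbE⟩⟩
    · exact ⟨fun _ => (ih.1 hbE).tail ⟨⟨hb, hbE⟩, ⟨hc, hcE⟩, hbc⟩, fun h => absurd h hcE⟩

def polygon (L : List ℂ) : Set ℂ := ⋃ p ∈ L.zip L.tail, segment ℝ p.1 p.2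

/-- `2π` times the winding number around `w` of the polygon through `L`, when it is closed. -/
noncomputable def argSum (L : List ℂ) (w : ℂ) : ℝ :=
  ((L.zip L.tail).map fun p => arg ((p.2 - w) / (p.1 - w))).sum

theorem notMem_segment_of_notMem_polygon {L : List ℂ} {w : ℂ} (hw : w ∉ polygon L)
    {p : ℂ × ℂ} (hp : p ∈ L.zip L.tail) : w ∉ segment ℝ p.1 p.2 :=
  fun h => hw (Set.mem_biUnion hp h)

theorem argSum_mem_zmultiples {L : List ℂ} (hL : L.head? = L.getLast?) {w : ℂ}
    (hw : w ∉ polygon L) : argSum L w ∈ AddSubgroup.zmultiples (2 * π) := by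
  obtain _ | ⟨a, l⟩ := L
  · simp [argSum]
  have hne : ∀ p ∈ (a :: l).zip l, p.1 - w ≠ 0 ∧ p.2 - w ≠ 0 := fun p hp =>
    have h := notMem_segment_of_notMem_polygon hw hp
    ⟨sub_ne_zero.mpr fun h' => h (h' ▸ left_mem_segment ℝ _ _),
      sub_ne_zero.mpr fun h' => h (h' ▸ right_mem_segment ℝ _ _)⟩
  have hlast : (a :: l).getLast (by simp) = a := by
    simpa [List.getLast?_eq_some_getLast] using hL.symm
  have hexp : Circle.exp (argSum (a :: l) w) = 1 :=
    calc Circle.exp (argSum (a :: l) w)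
        = (((a :: l).zip l).map fun p =>
            Circle.exp (arg (p.2 - w)) / Circle.exp (arg (p.1 - w))).prod := by
          rw [argSum, Circle.exp_list_sum, List.map_map, List.tail_cons]
          exact congrArg List.prod
            (List.map_congr_left fun p hp => Circle.exp_arg_div (hne p hp).2 (hne p hp).1)
      _ = 1 := by
          rw [List.prod_map_zip_tail_div (fun z => Circle.exp (arg (z - w))), hlast, div_self']
  obtain ⟨n, hn⟩ := Circle.exp_eq_one.mp hexp
  exact ⟨n, by simp [hn]⟩

theorem continuousOn_argSum (L : List ℂ) : ContinuousOn (argSum L) (polygon L)ᶜ := by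
  unfold argSum
  refine continuousOn_list_sum _ fun p hp w hw => ?_
  have hw' := notMem_segment_of_notMem_polygon hw hp
  have ha : p.1 - w ≠ 0 := sub_ne_zero.mpr fun h' => hw' (h' ▸ left_mem_segment ℝ _ _)
  have hq : ContinuousAt (fun w => (p.2 - w) / (p.1 - w)) w := by fun_prop (disch := exact ha)
  exact (ContinuousAt.comp (f := fun w => (p.2 - w) / (p.1 - w))
    (continuousAt_arg (div_mem_slitPlane_of_notMem_segment hw')) hq).continuousWithinAt

/-- `argSum L` is continuous and `2πℤ`-valued off the closed polygon, hence constant on the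
connected segment. -/
theorem argSum_eq_of_disjoint {L : List ℂ} (hL : L.head? = L.getLast?) {a b : ℂ}
    (h : Disjoint (segment ℝ a b) (polygon L)) : argSum L a = argSum L b :=
  (convex_segment a b).isPreconnected.constant_of_mapsTo
    (SetLike.isDiscrete_iff_discreteTopology.mpr inferInstance)
    ((continuousOn_argSum L).mono h.subset_compl_right)
    (fun _ hw => argSum_mem_zmultiples hL (Set.disjoint_left.mp h hw))
    (left_mem_segment ℝ a b) (right_mem_segment ℝ a b)

@[simp] theorem toC_re (z : Site) : (toC z).re = z.1 := by simp [toC]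

@[simp] theorem toC_im (z : Site) : (toC z).im = z.2 := by simp [toC]

theorem toC_injective : Function.Injective toC := fun a b h =>
  Prod.ext (by simpa using congrArg re h) (by simpa using congrArg im h)

theorem toC_sub (a b : Site) : toC (a - b) = toC a - toC b := by
  simp only [toC, Prod.fst_sub, Prod.snd_sub]
  push_cast
  ring

theorem floor_eq_min_and_ceil_eq_max {a b : ℤ} (hab : |a - b| ≤ 1) {θ : ℝ} (h0 : 0 < θ) (h1 : θ < 1) :
    ⌊(a : ℝ) + θ * (b - a)⌋ = min a b ∧ ⌈(a : ℝ) + θ * (b - a)⌉ = max a b := by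
  rw [abs_le] at hab
  obtain rfl | rfl | rfl : b = a ∨ b = a + 1 ∨ b = a - 1 := by omega
  · simp
  · rw [min_eq_left (by omega), max_eq_right (by omega), Int.floor_eq_iff, Int.ceil_eq_iff]
    push_cast
    constructor <;> constructor <;> linarith
  · rw [min_eq_right (by omega), max_eq_left (by omega), Int.floor_eq_iff, Int.ceil_eq_iff]
    push_cast
    constructor <;> constructor <;> linarith

/-- The relative interior of a `*`step lies in one cell of the lattice (a unit square, an edge
or a site), which the floors and ceilings of the coordinates identify. -/
theorem floor_ceil_of_mem_openSegment {u v : Site} (huv : adjStar u v) {z : ℂ}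
    (hz : z ∈ openSegment ℝ (toC u) (toC v)) :
    ⌊z.re⌋ = min u.1 v.1 ∧ ⌈z.re⌉ = max u.1 v.1 ∧ ⌊z.im⌋ = min u.2 v.2 ∧ ⌈z.im⌉ = max u.2 v.2 := by
  rw [openSegment_eq_image'] at hz
  obtain ⟨θ, ⟨h0, h1⟩, rfl⟩ := hz
  simp only [add_re, add_im, real_smul, mul_re, mul_im, sub_re, sub_im, ofReal_re, ofReal_im,
    toC_re, toC_im, zero_mul, sub_zero, add_zero]
  exact ⟨(floor_eq_min_and_ceil_eq_max huv.2.1 h0 h1).1, (floor_eq_min_and_ceil_eq_max huv.2.1 h0 h1).2,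
    (floor_eq_min_and_ceil_eq_max huv.2.2 h0 h1).1, (floor_eq_min_and_ceil_eq_max huv.2.2 h0 h1).2⟩

theorem eq_or_eq_of_toC_mem_segment {q u v : Site} (huv : adjStar u v)
    (h : toC q ∈ segment ℝ (toC u) (toC v)) : q = u ∨ q = v := by
  rw [← insert_endpoints_openSegment] at h
  rcases h with h | h | h
  · exact .inl (toC_injective h)
  · exact .inr (toC_injective h)
  · have := floor_ceil_of_mem_openSegment huv h
    simp only [toC_re, toC_im, Int.floor_intCast, Int.ceil_intCast] at this
    exact absurd (Prod.ext (by omega) (by omega)) huv.1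

theorem mem_openSegment_of_mem_segment {a b c d : Site} (hcd : adjStar c d) {z : ℂ}
    (hab : z ∈ segment ℝ (toC a) (toC b)) (hz : z ∈ segment ℝ (toC c) (toC d))
    (ha : a ≠ c ∧ a ≠ d) (hb : b ≠ c ∧ b ≠ d) : z ∈ openSegment ℝ (toC a) (toC b) := by
  rw [← insert_endpoints_openSegment] at hab
  rcases hab with rfl | rfl | h
  · exact ((eq_or_eq_of_toC_mem_segment hcd hz).elim ha.1 ha.2).elim
  · exact ((eq_or_eq_of_toC_mem_segment hcd hz).elim hb.1 hb.2).elim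
  · exact h

/-- Two `*`steps whose segments meet without sharing an endpoint are the two diagonals of one
unit square. -/
theorem diagonals_of_segments_meet {u v c d : Site} (huv : adjStar u v) (hcd : adjStar c d)
    {z : ℂ} (hzuv : z ∈ segment ℝ (toC u) (toC v)) (hzcd : z ∈ segment ℝ (toC c) (toC d))
    (hc : c ≠ u ∧ c ≠ v) (hd : d ≠ u ∧ d ≠ v) :
    c.1 ≠ d.1 ∧ c.2 ≠ d.2 ∧
      (u = (c.1, d.2) ∧ v = (d.1, c.2) ∨ u = (d.1, c.2) ∧ v = (c.1, d.2)) := by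
  have h₁ := floor_ceil_of_mem_openSegment huv <| mem_openSegment_of_mem_segment hcd hzuv hzcd
    ⟨hc.1.symm, hd.1.symm⟩ ⟨hc.2.symm, hd.2.symm⟩
  have h₂ := floor_ceil_of_mem_openSegment hcd <|
    mem_openSegment_of_mem_segment huv hzcd hzuv hc hd
  have huv := huv.1
  simp only [ne_eq, Prod.ext_iff] at hc hd huv ⊢
  rcases Int.eq_and_eq_or_of_min_max (h₁.1.symm.trans h₂.1) (h₁.2.1.symm.trans h₂.2.1)
    with h | h <;>
  rcases Int.eq_and_eq_or_of_min_max (h₁.2.2.1.symm.trans h₂.2.2.1) (h₁.2.2.2.symm.trans h₂.2.2.2)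
    with h' | h' <;> omega

theorem not_adj_of_ne_of_ne {a b : Site} (h₁ : a.1 ≠ b.1) (h₂ : a.2 ≠ b.2) : ¬ adj a b := by
  unfold adj
  have : 0 < (a.1 - b.1) ^ 2 := by positivity
  have : 0 < (a.2 - b.2) ^ 2 := by positivity
  omega

theorem windingAround_eq_argSum (L : List Site) (z : Site) :
    windingAround L z = (1 / (2 * π)) * argSum (L.map toC) (toC z) := by
  simp only [windingAround, winding, argSum, ← List.map_tail, List.zip_map, List.map_map]
  congr 2
  refine List.map_congr_left fun p _ => ?_
  simp [toC_sub]

theorem exists_edge_meets_segment_of_windingAround_ne {L : List Site}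
    (hL : L.head? = L.getLast?) {a b : Site} (h : windingAround L a ≠ windingAround L b) :
    ∃ p ∈ L.zip L.tail, ∃ z, z ∈ segment ℝ (toC a) (toC b) ∧ z ∈ segment ℝ (toC p.1) (toC p.2) := by
  by_contra! hcon
  refine h ?_
  rw [windingAround_eq_argSum, windingAround_eq_argSum,
    argSum_eq_of_disjoint (by simp [List.head?_map, List.getLast?_map, hL])]
  refine Set.disjoint_left.mpr fun z hz hzL => ?_
  obtain ⟨p, hp, hzp⟩ := Set.mem_iUnion₂.mp hzL
  rw [← List.map_tail, List.zip_map, List.mem_map] at hp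
  obtain ⟨p, hp, rfl⟩ := hp
  exact hcon p hp z hz hzp

theorem IsStarCircuit.isChain_append_take_one {C : List Site} (hC : IsStarCircuit C) :
    (C ++ C.take 1).IsChain adjStar := by
  obtain ⟨hchain, hne, hclose⟩ := hC
  obtain ⟨a, l, rfl⟩ := List.exists_cons_of_ne_nil hne
  refine List.isChain_append.mpr ⟨hchain, List.isChain_singleton a, ?_⟩
  simpa [List.getLast?_eq_some_getLast hne] using hclose

/-- The winding number of the circuit vanishes at `q` but not at `r`, so the segment from `q`
to `r` meets an edge. -/
theorem exists_edge_crossing {C : List Site} (hC : IsStarCircuit C) {q r : Site}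
    (hq : InExterior C q) (hr : circuitEncloses C r) (hqr : adjStar q r) :
    ∃ p ∈ (C ++ C.take 1).zip (C ++ C.take 1).tail, ¬ adj p.1 p.2 ∧
      adjStar q p.1 ∧ adjStar q p.2 ∧
      (q = (p.1.1, p.2.2) ∧ r = (p.2.1, p.1.2) ∨ q = (p.2.1, p.1.2) ∧ r = (p.1.1, p.2.2)) := by
  have hw : windingAround (C ++ C.take 1) q ≠ windingAround (C ++ C.take 1) r := by
    rw [show windingAround (C ++ C.take 1) q = 0 from not_not.mp fun h => hq.2 ⟨hq.1, h⟩]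
    exact hr.2.symm
  obtain ⟨p, hp, z, hzqr, hzp⟩ :=
    exists_edge_meets_segment_of_windingAround_ne (List.head?_eq_getLast?_append_take_one C) hw
  have hpC : ∀ c ∈ C ++ C.take 1, c ≠ q ∧ c ≠ r := fun c hc =>
    have hc : c ∈ C := (List.mem_append.mp hc).elim id List.mem_of_mem_take
    ⟨fun h => hq.1 (h ▸ hc), fun h => hr.1 (h ▸ hc)⟩
  have hpadj := List.rel_of_mem_zip_tail hC.isChain_append_take_one hp
  obtain ⟨h₁, h₂, hcorner⟩ := diagonals_of_segments_meet hqr hpadj hzqr hzp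
    (hpC _ (List.mem_of_mem_zip_tail hp).1) (hpC _ (List.mem_of_mem_zip_tail hp).2)
  refine ⟨p, hp, not_adj_of_ne_of_ne h₁ h₂, ?_, ?_, hcorner⟩ <;>
  · obtain ⟨-, hp₁, hp₂⟩ := hpadj
    rw [abs_le] at hp₁ hp₂
    rcases hcorner with ⟨rfl, -⟩ | ⟨rfl, -⟩ <;>
      exact ⟨by simp only [ne_eq, Prod.ext_iff, not_and]; omega, by rw [abs_le]; omega,
        by rw [abs_le]; omega⟩

theorem mem_or_closing_of_not_adj {P Q : List Site} (hQ : Q.IsChain adj) {p : Site × Site}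
    (hp : p ∈ (P ++ Q ++ (P ++ Q).take 1).zip (P ++ Q ++ (P ++ Q).take 1).tail)
    (hna : ¬ adj p.1 p.2) :
    p.1 ∈ P ∨ (P ++ Q).getLast? = some p.1 ∧ (P ++ Q).head? = some p.2 := by
  rw [List.take_one] at hp
  rcases List.mem_zip_tail_append hp with hp | hp | hp
  · rcases List.mem_zip_tail_append hp with hp | hp | hp
    · exact .inl (List.mem_of_mem_zip_tail hp).1
    · exact absurd (List.rel_of_mem_zip_tail hQ hp) hna
    · exact .inl (List.mem_of_getLast? hp.1)
  · generalize (P ++ Q).head? = o at hp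
    cases o <;> simp at hp
  · exact .inr ⟨hp.1, by cases h : (P ++ Q).head? <;> simp_all⟩

section Gates

variable {σ : Config}

theorem reflTransGen_head_of_gate {a : Site} {t Q : List Site} (hP : (a :: t).IsChain adjStar)
    (hQ : Q.IsChain adj) (hP1 : ∀ z ∈ a :: t, σ z = true) (hQ0 : ∀ z ∈ Q, σ z = false)
    (hC : IsStarCircuit (a :: t ++ Q)) {q r : Site}
    (hq : q ∈ {z | σ z = true} \ {z | circuitEncloses (a :: t ++ Q) z})
    (hr : r ∈ {z | σ z = true} ∩ {z | circuitEncloses (a :: t ++ Q) z}) (hqr : adjStar q r) :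
    ReflTransGen (RelIn adjStar ({z | σ z = true} \ {z | circuitEncloses (a :: t ++ Q) z}))
      q a := by
  set G := {z | σ z = true} \ {z | circuitEncloses (a :: t ++ Q) z}
  have hPG : ∀ z ∈ a :: t, z ∈ G := fun z hz =>
    ⟨hP1 z hz, fun h => h.1 (List.mem_append_left _ hz)⟩
  have hhub : ∀ z ∈ a :: t, ReflTransGen (RelIn adjStar G) z a := fun z hz =>
    reflTransGen_relIn_symm <| ((List.IsChain.iff_mem.mp hP).imp fun b c h =>
      ⟨hPG b h.1, hPG c h.2.1, h.2.2⟩).reflTransGen_head hz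
  by_cases hqC : q ∈ a :: t ++ Q
  · refine hhub q ((List.mem_append.mp hqC).resolve_right fun h => ?_)
    simpa [hQ0 q h] using hq.1
  · obtain ⟨p, hp, hna, hq₁, hq₂, -⟩ := exists_edge_crossing hC ⟨hqC, hq.2⟩ hr.2 hqr
    rcases mem_or_closing_of_not_adj hQ hp hna with h | ⟨-, h⟩
    · exact .head ⟨hq, hPG _ h, hq₁⟩ (hhub _ h)
    · obtain rfl : a = p.2 := by simpa using h
      exact .single ⟨hq, hPG _ List.mem_cons_self, hq₂⟩

/-- The only diagonal edge of a `0`circuit is its closing edge, so all gates cross it. -/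
theorem eq_of_gates_of_zero_circuit {C : List Site} (hC0 : C.IsChain adj)
    (hσ : ∀ z ∈ C, σ z = false) (hC : IsStarCircuit C) {q q' r r' : Site}
    (hq : q ∈ {z | σ z = true} \ {z | circuitEncloses C z})
    (hq' : q' ∈ {z | σ z = true} \ {z | circuitEncloses C z})
    (hr : r ∈ {z | σ z = true} ∩ {z | circuitEncloses C z})
    (hr' : r' ∈ {z | σ z = true} ∩ {z | circuitEncloses C z})
    (hqr : adjStar q r) (hqr' : adjStar q' r') : q = q' := by
  have hout : ∀ z, σ z = true → z ∉ C := fun z hz hzC => by simp [hσ z hzC] at hz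
  have hclosing {p : Site × Site} (hp : p ∈ (C ++ C.take 1).zip (C ++ C.take 1).tail)
      (hna : ¬ adj p.1 p.2) : C.getLast? = some p.1 ∧ C.head? = some p.2 := by
    simpa using mem_or_closing_of_not_adj (P := []) hC0 (by simpa using hp) hna
  obtain ⟨p, hp, hna, -, -, hpq⟩ := exists_edge_crossing hC ⟨hout q hq.1, hq.2⟩ hr.2 hqr
  obtain ⟨p', hp', hna', -, -, hpq'⟩ := exists_edge_crossing hC ⟨hout q' hq'.1, hq'.2⟩ hr'.2 hqr'
  obtain ⟨h₁, h₂⟩ := hclosing hp hna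
  obtain ⟨h₁', h₂'⟩ := hclosing hp' hna'
  obtain rfl : p = p' := Prod.ext (by simpa [h₁] using h₁') (by simpa [h₂] using h₂')
  rcases hpq with ⟨rfl, rfl⟩ | ⟨rfl, rfl⟩ <;> rcases hpq' with ⟨h, h'⟩ | ⟨h, h'⟩
  · exact h.symm
  · exact absurd (h' ▸ hr'.2) hq.2
  · exact absurd (h' ▸ hr'.2) hq.2
  · exact h.symm

theorem IsMixedCircuit.gates_joined {C : List Site} (hC : IsMixedCircuit σ C)
    (q q' r r' : Site) (hq : q ∈ {z | σ z = true} \ {z | circuitEncloses C z})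
    (hq' : q' ∈ {z | σ z = true} \ {z | circuitEncloses C z})
    (hr : r ∈ {z | σ z = true} ∩ {z | circuitEncloses C z})
    (hr' : r' ∈ {z | σ z = true} ∩ {z | circuitEncloses C z})
    (hqr : adjStar q r) (hqr' : adjStar q' r') :
    ReflTransGen (RelIn adjStar ({z | σ z = true} \ {z | circuitEncloses C z})) q q' := by
  obtain ⟨P, Q, rfl, -, hP, hQ, hP1, hQ0, hC⟩ := hC
  cases P with
  | nil =>
    rw [List.nil_append] at *
    exact eq_of_gates_of_zero_circuit hQ hQ0 hC hq hq' hr hr' hqr hqr' ▸ .refl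
  | cons a t =>
    exact (reflTransGen_head_of_gate hP hQ hP1 hQ0 hC hq hr hqr).trans <|
      reflTransGen_relIn_symm (reflTransGen_head_of_gate hP hQ hP1 hQ0 hC hq' hr' hqr')

end Gates

/-- A mixed circuit around `Δ` shields `Δ`: any two sites in its exterior that are joined
by a `1*`path are also joined by a `1*`path avoiding `Δ`. -/
theorem statement10 (σ : Config) (Δ : Finset Site) (C : List Site)
    (hC : IsMixedCircuit σ C) (hAround : CircuitAround C ↑Δ)
    (x y : Site) (hx : InExterior C x) (hy : InExterior C y)
    (hxy : ∃ P : List Site, Is1StarPath σ P ∧ P.head? = some x ∧ P.getLast? = some y) :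
    ∃ P : List Site, starPathBetweenAvoiding σ ↑Δ x y P := by
  obtain ⟨P, ⟨-, hP, hP1⟩, hPx, hPy⟩ := hxy
  have hjoin : JoinedIn adjStar {z | σ z = true} x y := ⟨P, hP, hP1, hPx, hPy⟩
  obtain ⟨hx1, hxy⟩ := joinedIn_iff.mp hjoin
  have hjoin' : JoinedIn adjStar ({z | σ z = true} \ {z | circuitEncloses C z}) x y :=
    joinedIn_iff.mpr ⟨⟨hx1, hx.2⟩, reflTransGen_diff_of_gates hC.gates_joined hx.2 hy.2 hxy⟩
  obtain ⟨M, hM, hMG, hMx, hMy⟩ := hjoin'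
  exact ⟨M, ⟨fun h => by simp [h] at hMx, hM, fun z hz => (hMG z hz).1⟩, hMx, hMy,
    fun z hz hzΔ => (hMG z hz).2 (hAround z hzΔ)⟩

end Percolation
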